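/- arXiv:2206.13643 — 9 statements merged into one kernel-verified Lean document; each statement's English description precedes it below -/
import Mathlib

section
/- A discrete fibration P : C ⥤ D has a left adjoint if and only if P is an isomorphism of categories, i.e., P is fully faithful and the object map P.obj is a bijection. -/
open CategoryTheory

/-- A functor `P : C ⥤ D` is a discrete fibration if for every object `c : C` and every
morphism `f : d ⟶ P.obj c` there is a unique pair of an object `c'` and a morphism
`g : c' ⟶ c` lying over `f`, i.e. with `P.obj c' = d` and `P.map g = eqToHom h ≫ f`. -/
def IsDiscreteFibration {C D : Type*} [Category C] [Category D] (P : C ⥤ D) : Prop :=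
  ∀ (c : C) (d : D) (f : d ⟶ P.obj c),
    ∃! cg : Σ c' : C, c' ⟶ c, ∃ h : P.obj cg.1 = d, P.map cg.2 = eqToHom h ≫ f

/-- A discrete fibration has a left adjoint if and only if it is an isomorphism of
categories, i.e. it is fully faithful and bijective on objects. -/
theorem discreteFibration_isRightAdjoint_iff_iso_of_categories
    {C D : Type*} [Category C] [Category D]
    (P : C ⥤ D) (hP : IsDiscreteFibration P) :
    P.IsRightAdjoint ↔ (P.Full ∧ P.Faithful ∧ Function.Bijective P.obj) := by
  constructor
  · intro h
    obtain ⟨L, ⟨adj⟩⟩ := h.exists_leftAdjoint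
    -- vertical morphisms force equality of objects
    have vert : ∀ (c₁ c₂ : C) (h : P.obj c₁ = P.obj c₂) (g : c₁ ⟶ c₂),
        P.map g = eqToHom h → c₁ = c₂ := by
      intro c₁ c₂ h g hg
      obtain ⟨cg, hcg, huniq⟩ := hP c₂ (P.obj c₂) (𝟙 _)
      have h1 := huniq ⟨c₁, g⟩ ⟨h, by simp [hg]⟩
      have h2 := huniq ⟨c₂, 𝟙 c₂⟩ ⟨rfl, by simp⟩
      exact congrArg Sigma.fst (h1.trans h2.symm)
    have inj : Function.Injective P.obj := by
      intro c₁ c₂ h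
      obtain ⟨⟨x, σ⟩, ⟨hx, hσ⟩, _⟩ :=
        hP (L.obj (P.obj c₁)) (P.obj c₁) (adj.unit.app (P.obj c₁))
      have e1 : x = c₁ := by
        refine vert x c₁ (by rw [hx]) (σ ≫ adj.counit.app c₁) ?_
        rw [P.map_comp, hσ, Category.assoc, adj.right_triangle_components,
          Category.comp_id]
      have e2 : x = c₂ := by
        refine vert x c₂ (by rw [hx, h]) (σ ≫ L.map (eqToHom h) ≫ adj.counit.app c₂) ?_
        have nat := adj.unit.naturality (eqToHom h)
        simp only [Functor.id_map, Functor.comp_map] at nat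
        rw [P.map_comp, P.map_comp, hσ]
        slice_lhs 2 3 => rw [← nat]
        simp [eqToHom_map]
      exact e1.symm.trans e2
    have surj : Function.Surjective P.obj := by
      intro d
      obtain ⟨⟨x, σ⟩, ⟨hx, hσ⟩, _⟩ := hP (L.obj d) d (adj.unit.app d)
      exact ⟨x, hx⟩
    have faith : P.Faithful := by
      constructor
      intro a b g₁ g₂ hgg
      obtain ⟨cg, hcg, huniq⟩ := hP b (P.obj a) (P.map g₂)
      have h1 := huniq ⟨a, g₁⟩ ⟨rfl, by simp [hgg]⟩
      have h2 := huniq ⟨a, g₂⟩ ⟨rfl, by simp⟩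
      simpa using h1.trans h2.symm
    have full : P.Full := by
      constructor
      intro a b f
      obtain ⟨⟨x, g⟩, ⟨hx, hg⟩, _⟩ := hP b (P.obj a) f
      have e : a = x := (inj hx).symm
      refine ⟨eqToHom e ≫ g, ?_⟩
      rw [P.map_comp, hg, eqToHom_map, ← Category.assoc, eqToHom_trans, eqToHom_refl,
        Category.id_comp]
    exact ⟨full, faith, inj, surj⟩
  · rintro ⟨hfull, hfaith, hinj, hsurj⟩
    haveI := hfull
    haveI := hfaith
    haveI : P.EssSurj := Functor.essSurj_of_surj hsurj
    haveI : P.IsEquivalence := {}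
    infer_instance
end

section
/- Let p : D ⥤ B be a Grothendieck fibration (p.IsFibered) and q : E ⥤ B a functor. Suppose F : D ⥤ E satisfies F ⋙ q = p, G : E ⥤ D satisfies G ⋙ p = q, and there is an adjunction F ⊣ G whose unit components are sent by p to identity morphisms and whose counit components are sent by q to identity morphisms (modulo eqToHom). Then G sends every morphism of E that is strongly cartesian with respect to q to a morphism of D that is strongly cartesian with respect to p. -/
open CategoryTheory

private lemma vert_map {𝒳 𝒮 : Type*} [Category 𝒳] [Category 𝒮] {p : 𝒳 ⥤ 𝒮} {S : 𝒮}
    {a b : 𝒳} (ξ : a ⟶ b) [p.IsHomLift (𝟙 S) ξ] :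
    p.map ξ = eqToHom ((IsHomLift.domain_eq p (𝟙 S) ξ).trans
      (IsHomLift.codomain_eq p (𝟙 S) ξ).symm) := by
  rw [IsHomLift.fac' p (𝟙 S) ξ]
  simp [eqToHom_trans]

/-- If `p : D ⥤ B` is a Grothendieck fibration, `q : E ⥤ B` a functor, and `F ⊣ G` is an
adjunction over `B` (i.e. `F ⋙ q = p`, `G ⋙ p = q`, and the unit and counit are vertical),
then `G` sends strongly cartesian morphisms to strongly cartesian morphisms. -/
theorem rightAdjoint_over_preserves_stronglyCartesian
    {B D E : Type*} [Category B] [Category D] [Category E]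
    (p : D ⥤ B) [p.IsFibered] (q : E ⥤ B)
    (F : D ⥤ E) (hF : F ⋙ q = p)
    (G : E ⥤ D) (hG : G ⋙ p = q)
    (adj : F ⊣ G)
    (hunit : ∀ X : D, p.IsHomLift (𝟙 (p.obj X)) (adj.unit.app X))
    (hcounit : ∀ Y : E, q.IsHomLift (𝟙 (q.obj Y)) (adj.counit.app Y))
    {X Y : E} (φ : X ⟶ Y) (hφ : q.IsStronglyCartesian (q.map φ) φ) :
    p.IsStronglyCartesian (p.map (G.map φ)) (G.map φ) := by
  subst hF
  constructor
  intro Z g ψ hψ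
  -- object equalities coming from `hG`
  have eX : q.obj (F.obj (G.obj X)) = q.obj X := Functor.congr_obj hG X
  have eY : q.obj (F.obj (G.obj Y)) = q.obj Y := Functor.congr_obj hG Y
  -- the transpose of ψ
  set ψ' : F.obj Z ⟶ Y := F.map ψ ≫ adj.counit.app Y with hψ'
  have hcY : q.map (adj.counit.app Y) = eqToHom (by
      exact (IsHomLift.domain_eq q (𝟙 (q.obj Y)) (adj.counit.app Y)).trans
        (IsHomLift.codomain_eq q (𝟙 (q.obj Y)) (adj.counit.app Y)).symm) :=
    vert_map (S := q.obj Y) _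
  have hcX : q.map (adj.counit.app X) = eqToHom (by
      exact (IsHomLift.domain_eq q (𝟙 (q.obj X)) (adj.counit.app X)).trans
        (IsHomLift.codomain_eq q (𝟙 (q.obj X)) (adj.counit.app X)).symm) :=
    vert_map (S := q.obj X) _
  have hGφ : q.map (F.map (G.map φ)) = eqToHom eX ≫ q.map φ ≫ eqToHom eY.symm := by
    have := Functor.congr_hom hG φ
    simpa using this
  -- `ψ` lies over `g ≫ q.map (F.map (G.map φ))`, hence `F.map ψ` does too
  have hFψ : q.map (F.map ψ) = g ≫ q.map (F.map (G.map φ)) :=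
    (IsHomLift.eq_of_isHomLift (F ⋙ q) (g ≫ (F ⋙ q).map (G.map φ)) ψ).symm
  have hψ'lift : q.IsHomLift ((g ≫ eqToHom eX) ≫ q.map φ) ψ' := by
    apply IsHomLift.of_fac' q _ _ rfl rfl
    rw [hψ', q.map_comp, hFψ, hGφ, hcY]
    simp
  -- the unique lift of `g ≫ eqToHom eX` through `φ`
  have huniv := Functor.IsStronglyCartesian.universal_property q (q.map φ) φ
    (g ≫ eqToHom eX) ((g ≫ eqToHom eX) ≫ q.map φ) rfl ψ'
  obtain ⟨χ', ⟨hχ'lift, hχ'fac⟩, hχ'uniq⟩ := huniv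
  -- candidate morphism
  refine ⟨adj.unit.app Z ≫ G.map χ', ⟨?_, ?_⟩, ?_⟩
  · -- it lies over g
    apply IsHomLift.of_fac' (F ⋙ q) _ _ rfl rfl
    have huZ : q.map (F.map (adj.unit.app Z)) = eqToHom (by
        exact (IsHomLift.domain_eq (F ⋙ q) (𝟙 ((F ⋙ q).obj Z)) (adj.unit.app Z)).trans
          (IsHomLift.codomain_eq (F ⋙ q) (𝟙 ((F ⋙ q).obj Z)) (adj.unit.app Z)).symm) :=
      vert_map (p := F ⋙ q) (S := (F ⋙ q).obj Z) _
    have hGχ' : q.map (F.map (G.map χ')) =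
        eqToHom (Functor.congr_obj hG (F.obj Z)) ≫ q.map χ' ≫
          eqToHom (Functor.congr_obj hG X).symm := by
      simpa using Functor.congr_hom hG χ'
    have hqχ' : q.map χ' = eqToHom (IsHomLift.domain_eq q (g ≫ eqToHom eX) χ') ≫
        (g ≫ eqToHom eX) ≫
        eqToHom (IsHomLift.codomain_eq q (g ≫ eqToHom eX) χ').symm :=
      IsHomLift.fac' q _ _
    show q.map (F.map (adj.unit.app Z ≫ G.map χ')) = _
    rw [F.map_comp, q.map_comp, huZ, hGχ', hqχ']
    simp
  · -- factorization
    rw [Category.assoc, ← G.map_comp, hχ'fac, hψ', G.map_comp, ← Category.assoc]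
    have hnat : adj.unit.app Z ≫ G.map (F.map ψ) = ψ ≫ adj.unit.app (G.obj Y) := by
      simpa using (adj.unit.naturality ψ).symm
    rw [hnat, Category.assoc, adj.right_triangle_components, Category.comp_id]
  · -- uniqueness
    rintro χ₂ ⟨hχ₂lift, hχ₂fac⟩
    have hFχ₂ : q.map (F.map χ₂) = g :=
      (IsHomLift.eq_of_isHomLift (F ⋙ q) g χ₂).symm
    have h1 : q.IsHomLift (g ≫ eqToHom eX) (F.map χ₂ ≫ adj.counit.app X) := by
      apply IsHomLift.of_fac' q _ _ rfl rfl
      rw [q.map_comp, hFχ₂, hcX]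
      simp
    have h2 : (F.map χ₂ ≫ adj.counit.app X) ≫ φ = ψ' := by
      have hcnat : adj.counit.app X ≫ φ = F.map (G.map φ) ≫ adj.counit.app Y := by
        simpa using (adj.counit.naturality φ).symm
      rw [hψ', Category.assoc, hcnat, ← Category.assoc, ← F.map_comp, hχ₂fac]
    have h3 : F.map χ₂ ≫ adj.counit.app X = χ' := hχ'uniq _ ⟨h1, h2⟩
    have hnat2 : adj.unit.app Z ≫ G.map (F.map χ₂) = χ₂ ≫ adj.unit.app (G.obj X) := by
      simpa using (adj.unit.naturality χ₂).symm
    calc χ₂ = adj.unit.app Z ≫ G.map (F.map χ₂ ≫ adj.counit.app X) := by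
              rw [G.map_comp, ← Category.assoc, hnat2, Category.assoc,
                adj.right_triangle_components, Category.comp_id]
         _ = adj.unit.app Z ≫ G.map χ' := by rw [h3]
end

section
/- Let p : D ⥤ B be a Grothendieck fibration, q : E ⥤ B a functor, and F : D ⥤ E a functor with F ⋙ q = p. Let X be an object of E over I = q.obj X, and suppose given an object GX of D with p.obj GX = I together with a vertical morphism ε : F.obj GX ⟶ X that is a terminal object of the comma category CostructuredArrow F X. Let f : X' ⟶ X be strongly cartesian with respect to q over σ := q.map f : J ⟶ I, and let σ̄ : GX' ⟶ GX be a strongly cartesian lift of σ in D with codomain GX. Then there is a unique vertical morphism ε' : F.obj GX' ⟶ X' satisfying ε' ≫ f = F.map σ̄ ≫ ε, and ε' is a terminal object of the comma category CostructuredArrow F X'. -/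
/-!
The counit `ε'` is the factorization of `F σ̄ ≫ ε` through the cartesian `f`. For terminality,
given `u : F A ⟶ X'`, terminality of `ε` yields `s : A ⟶ GX` with `F s ≫ ε = u ≫ f`. As `ε` is
vertical, `s` lies over `q u ≫ q f`, so it factors as `t ≫ σ̄` with `t` over `q u`; then `F t ≫ ε'`
and `u` both lie over `q u` and agree after composing with `f`, hence are equal. Uniqueness of `t`
combines the uniqueness parts of the two universal properties.
-/

open CategoryTheory Limits

namespace CategoryTheory

variable {B D E : Type*} [Category B] [Category D] [Category E]

lemma Functor.isHomLift_comp_iff (F : D ⥤ E) (q : E ⥤ B) {R S : B} {a b : D} (f : R ⟶ S)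
    (φ : a ⟶ b) : (F ⋙ q).IsHomLift f φ ↔ q.IsHomLift f (F.map φ) := by
  constructor <;> rintro ⟨⟩ <;> exact .map _

lemma IsHomLift.of_comp_lift_id_right (q : E ⥤ B) {R S : B} {a b c : E} (g : R ⟶ S)
    (φ : a ⟶ b) (ε : b ⟶ c) [q.IsHomLift (𝟙 S) ε] [q.IsHomLift g (φ ≫ ε)] :
    q.IsHomLift g φ := by
  have h := fac' q g (φ ≫ ε)
  rw [q.map_comp, fac' q (𝟙 S) ε] at h
  apply of_fac' q g φ (domain_eq q g (φ ≫ ε)) (domain_eq q (𝟙 S) ε)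
  simpa [comp_eqToHom_iff] using h

noncomputable def CostructuredArrow.IsUniversal.ofExistsUnique {S : D ⥤ E} {T : E}
    {f : CostructuredArrow S T}
    (h : ∀ g : CostructuredArrow S T, ∃! η : g.left ⟶ f.left, S.map η ≫ f.hom = g.hom) :
    f.IsUniversal := by
  choose η hη using h
  exact IsTerminal.ofUniqueHom (fun g => CostructuredArrow.homMk (η g) (hη g).1)
    fun g m => CostructuredArrow.hom_ext _ _ ((hη g).2 m.left (CostructuredArrow.w m))

variable (q : E ⥤ B) {F : D ⥤ E}

lemma isHomLift_of_map_comp_eq_of_lift_id {a c : D} {b : E} {ε : F.obj a ⟶ b}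
    [q.IsHomLift (𝟙 (q.obj b)) ε] {s : c ⟶ a} {v : F.obj c ⟶ b} (h : F.map s ≫ ε = v) :
    (F ⋙ q).IsHomLift (q.map v) s := by
  have : q.IsHomLift (q.map v) (F.map s ≫ ε) := h ▸ IsHomLift.map q v
  exact (F.isHomLift_comp_iff q _ s).2 (IsHomLift.of_comp_lift_id_right q _ _ ε)

variable {X X' : E} {GX GX' : D} {ε : F.obj GX ⟶ X} {ε' : F.obj GX' ⟶ X'} {f : X' ⟶ X}
  {σbar : GX' ⟶ GX}

lemma existsUnique_map_comp_eq_of_isStronglyCartesian [q.IsHomLift (𝟙 (q.obj X)) ε]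
    (hε : (CostructuredArrow.mk ε).IsUniversal) [q.IsStronglyCartesian (q.map f) f]
    [(F ⋙ q).IsStronglyCartesian (q.map f) σbar] [q.IsHomLift (𝟙 (q.obj X')) ε']
    (hε' : ε' ≫ f = F.map σbar ≫ ε) {A : D} (u : F.obj A ⟶ X') :
    ∃! t : A ⟶ GX', F.map t ≫ ε' = u := by
  obtain ⟨s, hs⟩ : ∃ s : A ⟶ GX, F.map s ≫ ε = u ≫ f :=
    ⟨hε.lift (.mk (u ≫ f)), hε.fac (.mk (u ≫ f))⟩
  have := isHomLift_of_map_comp_eq_of_lift_id q hs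
  obtain ⟨t, ⟨ht_lift, ht⟩, ht_uniq⟩ := Functor.IsStronglyCartesian.universal_property (F ⋙ q)
    (q.map f) σbar (q.map u) (q.map (u ≫ f)) (q.map_comp u f) s
  refine ⟨t, ?_, fun t' ht' => ht_uniq t' ⟨isHomLift_of_map_comp_eq_of_lift_id q ht', ?_⟩⟩
  · have := (F.isHomLift_comp_iff q _ t).1 ht_lift
    apply Functor.IsStronglyCartesian.ext q (q.map f) f (q.map u)
    rw [Category.assoc, hε', ← Category.assoc, ← F.map_comp, ht, hs]
  · apply hε.hom_ext
    simp only [CostructuredArrow.mk_hom_eq_self, F.map_comp, Category.assoc, ← hε']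
    rw [← Category.assoc, ht', hs]

noncomputable def isUniversalOfIsStronglyCartesian [q.IsHomLift (𝟙 (q.obj X)) ε]
    (hε : (CostructuredArrow.mk ε).IsUniversal) [q.IsStronglyCartesian (q.map f) f]
    [(F ⋙ q).IsStronglyCartesian (q.map f) σbar] [q.IsHomLift (𝟙 (q.obj X')) ε']
    (hε' : ε' ≫ f = F.map σbar ≫ ε) : (CostructuredArrow.mk ε').IsUniversal :=
  .ofExistsUnique fun g => existsUnique_map_comp_eq_of_isStronglyCartesian q hε hε' g.hom

end CategoryTheory

theorem partial_right_adjoint_defined_at_cartesian_general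
    {B D E : Type*} [Category B] [Category D] [Category E]
    (p : D ⥤ B) (q : E ⥤ B)
    (F : D ⥤ E) (hF : F ⋙ q = p)
    {X : E} {GX : D} (ε : F.obj GX ⟶ X)
    (hε : q.IsHomLift (𝟙 (q.obj X)) ε)
    (hterm : IsTerminal (CostructuredArrow.mk ε))
    {X' : E} (f : X' ⟶ X) (hf : q.IsStronglyCartesian (q.map f) f)
    {GX' : D} (σbar : GX' ⟶ GX) (hσbar : p.IsStronglyCartesian (q.map f) σbar) :
    ∃ ε' : F.obj GX' ⟶ X',
      (q.IsHomLift (𝟙 (q.obj X')) ε' ∧ ε' ≫ f = F.map σbar ≫ ε) ∧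
      (∀ ε'' : F.obj GX' ⟶ X',
        q.IsHomLift (𝟙 (q.obj X')) ε'' ∧ ε'' ≫ f = F.map σbar ≫ ε → ε'' = ε') ∧
      Nonempty (IsTerminal (CostructuredArrow.mk ε')) := by
  subst hF
  have : q.IsHomLift (q.map f) (F.map σbar) := (F.isHomLift_comp_iff q _ σbar).1 inferInstance
  obtain ⟨ε', ⟨hε'_lift, hε'⟩, hε'_uniq⟩ := Functor.IsStronglyCartesian.universal_property q
    (q.map f) f (𝟙 _) (q.map f) (Category.id_comp _).symm (F.map σbar ≫ ε)
  exact ⟨ε', ⟨hε'_lift, hε'⟩, hε'_uniq, ⟨isUniversalOfIsStronglyCartesian q hterm hε'⟩⟩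

/-- Let `p : D ⥤ B` be a Grothendieck fibration, `q : E ⥤ B` a functor and `F : D ⥤ E` a
functor over `B`.  Suppose the partial right adjoint to `F` is defined at `X : E`, i.e. we
have `GX : D` and a vertical morphism `ε : F.obj GX ⟶ X` which is terminal in the comma
category `CostructuredArrow F X`.  If `f : X' ⟶ X` is strongly cartesian over `σ = q.map f`
and `σ̄ : GX' ⟶ GX` is a strongly cartesian lift of `σ`, then there is a unique vertical
morphism `ε' : F.obj GX' ⟶ X'` with `ε' ≫ f = F.map σ̄ ≫ ε`, and this `ε'` is terminal in
`CostructuredArrow F X'`. -/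
theorem partial_right_adjoint_defined_at_cartesian
    {B D E : Type*} [Category B] [Category D] [Category E]
    (p : D ⥤ B) [p.IsFibered] (q : E ⥤ B)
    (F : D ⥤ E) (hF : F ⋙ q = p)
    {X : E} {GX : D} (ε : F.obj GX ⟶ X)
    (hε : q.IsHomLift (𝟙 (q.obj X)) ε)
    (hterm : IsTerminal (CostructuredArrow.mk ε))
    {X' : E} (f : X' ⟶ X) (hf : q.IsStronglyCartesian (q.map f) f)
    {GX' : D} (σbar : GX' ⟶ GX) (hσbar : p.IsStronglyCartesian (q.map f) σbar) :
    ∃ ε' : F.obj GX' ⟶ X',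
      (q.IsHomLift (𝟙 (q.obj X')) ε' ∧ ε' ≫ f = F.map σbar ≫ ε) ∧
      (∀ ε'' : F.obj GX' ⟶ X',
        q.IsHomLift (𝟙 (q.obj X')) ε'' ∧ ε'' ≫ f = F.map σbar ≫ ε → ε'' = ε') ∧
      Nonempty (IsTerminal (CostructuredArrow.mk ε')) :=
  partial_right_adjoint_defined_at_cartesian_general p q F hF ε hε hterm f hf σbar hσbar
end

section
/- Let p : D ⥤ B be a Grothendieck fibration and q : E ⥤ B a functor. Suppose G : D ⥤ E satisfies G ⋙ q = p, G sends strongly cartesian morphisms (with respect to p) to strongly cartesian morphisms (with respect to q), and G has a left adjoint as an ordinary functor. Then there exists a functor F : E ⥤ D with F ⋙ p = q and an adjunction F ⊣ G whose unit components are sent by q to identity morphisms and whose counit components are sent by p to identity morphisms (modulo eqToHom). -/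
open CategoryTheory

open CategoryTheory CategoryTheory.Functor CategoryTheory.IsHomLift CategoryTheory.Category

set_option linter.unusedSectionVars false

namespace FibredAdjAux

variable {B D E : Type*} [Category B] [Category D] [Category E]

lemma homLift_id_congr (p : D ⥤ B) {R R' : B} (h : R = R') {a b : D} (φ : a ⟶ b)
    [p.IsHomLift (𝟙 R) φ] : p.IsHomLift (𝟙 R') φ := by subst h; assumption

lemma map_isStronglyCartesian (p : D ⥤ B) {R S : B} (f : R ⟶ S) {a b : D} (φ : a ⟶ b)
    [p.IsStronglyCartesian f φ] : p.IsStronglyCartesian (p.map φ) φ := by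
  subst_hom_lift p f φ; infer_instance

lemma homLift_of_homLift_map (p : D ⥤ B) (q : E ⥤ B) {R S : B} (f : R ⟶ S) {x y : E}
    (m : x ⟶ y) [q.IsHomLift f m] {a b : D} (ψ : a ⟶ b) [p.IsHomLift (q.map m) ψ] :
    p.IsHomLift f ψ := by
  subst_hom_lift q f m; assumption

lemma isStronglyCartesian_of_map (q : E ⥤ B) {R S : B} (f : R ⟶ S) {a b : E} (φ : a ⟶ b)
    [q.IsHomLift f φ] (h : q.IsStronglyCartesian (q.map φ) φ) : q.IsStronglyCartesian f φ := by
  subst_hom_lift q f φ; exact h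

section

variable (p : D ⥤ B) [p.IsFibered] (q : E ⥤ B) (G : D ⥤ E) (hG : G ⋙ q = p)
  (L : E ⥤ D) (adj : L ⊣ G)

include hG

lemma hobj (d : D) : q.obj (G.obj d) = p.obj d := Functor.congr_obj hG d

lemma hmap {a b : D} (ψ : a ⟶ b) :
    q.map (G.map ψ) = eqToHom (hobj p q G hG a) ≫ p.map ψ ≫ eqToHom (hobj p q G hG b).symm :=
  Functor.congr_hom hG ψ

/-- `G` sends lifts of `f` to lifts of `f`. -/
lemma homLift_G {R S : B} (f : R ⟶ S) {a b : D} (ψ : a ⟶ b) [p.IsHomLift f ψ] :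
    q.IsHomLift f (G.map ψ) := by
  subst_hom_lift p f ψ
  exact IsHomLift.of_fac' q (p.map ψ) (G.map ψ) (hobj p q G hG _) (hobj p q G hG _)
    (hmap p q G hG ψ)

/-- The base morphism over which the cartesian lift defining `F X` is taken. -/
noncomputable def f₀ (X : E) : q.obj X ⟶ p.obj (L.obj X) :=
  q.map (adj.unit.app X) ≫ eqToHom (hobj p q G hG (L.obj X))

/-- The object `F X`. -/
noncomputable def FX (X : E) : D :=
  Functor.IsPreFibered.pullbackObj (p := p) rfl (f₀ p q G hG L adj X)

/-- The chosen cartesian lift `φX : F X ⟶ L X` of `f₀ X`. -/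
noncomputable def φX (X : E) : FX p q G hG L adj X ⟶ L.obj X :=
  Functor.IsPreFibered.pullbackMap (p := p) rfl (f₀ p q G hG L adj X)

instance φX_isCartesian (X : E) : p.IsCartesian (f₀ p q G hG L adj X) (φX p q G hG L adj X) :=
  Functor.IsPreFibered.pullbackMap.IsCartesian _ _

instance φX_isStronglyCartesian (X : E) :
    p.IsStronglyCartesian (f₀ p q G hG L adj X) (φX p q G hG L adj X) :=
  Functor.IsFibered.isStronglyCartesian_of_isCartesian p _ _

lemma proj (X : E) : p.obj (FX p q G hG L adj X) = q.obj X :=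
  Functor.IsPreFibered.pullbackObj_proj rfl (f₀ p q G hG L adj X)

lemma GφX_isStronglyCartesian
    (hcart : ∀ {X Y : D} (φ : X ⟶ Y), p.IsStronglyCartesian (p.map φ) φ →
      q.IsStronglyCartesian (q.map (G.map φ)) (G.map φ)) (X : E) :
    q.IsStronglyCartesian (f₀ p q G hG L adj X) (G.map (φX p q G hG L adj X)) := by
  haveI : q.IsHomLift (f₀ p q G hG L adj X) (G.map (φX p q G hG L adj X)) :=
    homLift_G p q G hG _ _
  exact isStronglyCartesian_of_map q _ _
    (hcart _ (map_isStronglyCartesian p (f₀ p q G hG L adj X) _))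

variable (hcart : ∀ {X Y : D} (φ : X ⟶ Y), p.IsStronglyCartesian (p.map φ) φ →
      q.IsStronglyCartesian (q.map (G.map φ)) (G.map φ))

instance unit_homLift (X : E) : q.IsHomLift (f₀ p q G hG L adj X) (adj.unit.app X) := by
  show q.IsHomLift (q.map (adj.unit.app X) ≫ eqToHom (hobj p q G hG (L.obj X))) (adj.unit.app X)
  infer_instance

include hcart in
lemma GφX_isStronglyCartesian' (X : E) :
    q.IsStronglyCartesian (f₀ p q G hG L adj X) (G.map (φX p q G hG L adj X)) :=
  GφX_isStronglyCartesian p q G hG L adj hcart X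

/-- The unit of the fibred adjunction. -/
noncomputable def η (X : E) : X ⟶ G.obj (FX p q G hG L adj X) :=
  haveI := GφX_isStronglyCartesian p q G hG L adj hcart X
  IsStronglyCartesian.map q (f₀ p q G hG L adj X) (G.map (φX p q G hG L adj X))
    (show f₀ p q G hG L adj X = 𝟙 (q.obj X) ≫ f₀ p q G hG L adj X from (id_comp _).symm)
    (adj.unit.app X)

lemma η_homLift (X : E) : q.IsHomLift (𝟙 (q.obj X)) (η p q G hG L adj hcart X) :=
  haveI := GφX_isStronglyCartesian p q G hG L adj hcart X
  IsStronglyCartesian.map_isHomLift q _ _ _ _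

lemma η_fac (X : E) :
    η p q G hG L adj hcart X ≫ G.map (φX p q G hG L adj X) = adj.unit.app X :=
  haveI := GφX_isStronglyCartesian p q G hG L adj hcart X
  IsStronglyCartesian.fac q _ _ _ _

omit hcart in
lemma baseq {X Y : E} (m : X ⟶ Y) :
    q.map m ≫ f₀ p q G hG L adj Y = f₀ p q G hG L adj X ≫ p.map (L.map m) := by
  have h1 : m ≫ adj.unit.app Y = adj.unit.app X ≫ G.map (L.map m) := by
    simpa using adj.unit.naturality m
  unfold f₀
  rw [← assoc, ← q.map_comp, h1, q.map_comp, assoc, hmap p q G hG (L.map m)]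
  simp

omit hcart in
lemma homLift_comp_φL {X Y : E} (m : X ⟶ Y) :
    p.IsHomLift (q.map m ≫ f₀ p q G hG L adj Y) (φX p q G hG L adj X ≫ L.map m) := by
  rw [baseq p q G hG L adj m]
  infer_instance

/-- The action of `F` on morphisms. -/
noncomputable def Fmap {X Y : E} (m : X ⟶ Y) : FX p q G hG L adj X ⟶ FX p q G hG L adj Y :=
  haveI := homLift_comp_φL p q G hG L adj m
  IsStronglyCartesian.map p (f₀ p q G hG L adj Y) (φX p q G hG L adj Y)
    (rfl : q.map m ≫ f₀ p q G hG L adj Y = q.map m ≫ f₀ p q G hG L adj Y)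
    (φX p q G hG L adj X ≫ L.map m)

omit hcart in
lemma Fmap_homLift {X Y : E} (m : X ⟶ Y) :
    p.IsHomLift (q.map m) (Fmap p q G hG L adj m) :=
  haveI := homLift_comp_φL p q G hG L adj m
  IsStronglyCartesian.map_isHomLift p _ _ _ _

omit hcart in
lemma Fmap_fac {X Y : E} (m : X ⟶ Y) :
    Fmap p q G hG L adj m ≫ φX p q G hG L adj Y = φX p q G hG L adj X ≫ L.map m :=
  haveI := homLift_comp_φL p q G hG L adj m
  IsStronglyCartesian.fac p _ _ _ _

/-- The fibred left adjoint `F`. -/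
noncomputable def F : E ⥤ D where
  obj X := FX p q G hG L adj X
  map m := Fmap p q G hG L adj m
  map_id X := by
    haveI : p.IsHomLift (q.map (𝟙 X)) (𝟙 (FX p q G hG L adj X)) := by
      rw [q.map_id]; exact IsHomLift.id (proj p q G hG L adj X)
    haveI := Fmap_homLift p q G hG L adj (𝟙 X)
    apply IsStronglyCartesian.ext p (f₀ p q G hG L adj X) (φX p q G hG L adj X) (q.map (𝟙 X))
    rw [Fmap_fac]
    simp
  map_comp {X Y Z} m m' := by
    haveI := Fmap_homLift p q G hG L adj (m ≫ m')
    haveI := Fmap_homLift p q G hG L adj m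
    haveI := Fmap_homLift p q G hG L adj m'
    haveI : p.IsHomLift (q.map (m ≫ m'))
        (Fmap p q G hG L adj m ≫ Fmap p q G hG L adj m') := by
      rw [q.map_comp]; infer_instance
    apply IsStronglyCartesian.ext p (f₀ p q G hG L adj Z) (φX p q G hG L adj Z) (q.map (m ≫ m'))
    rw [Fmap_fac, assoc, Fmap_fac, ← assoc, Fmap_fac, assoc, L.map_comp]

omit hcart in
lemma hFp : F p q G hG L adj ⋙ p = q := by
  refine CategoryTheory.Functor.ext (proj p q G hG L adj) (fun X Y m => ?_)
  haveI := Fmap_homLift p q G hG L adj m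
  exact IsHomLift.fac' p (q.map m) (Fmap p q G hG L adj m)

lemma η_nat {X Y : E} (m : X ⟶ Y) :
    m ≫ η p q G hG L adj hcart Y = η p q G hG L adj hcart X ≫ G.map (Fmap p q G hG L adj m) := by
  haveI := GφX_isStronglyCartesian p q G hG L adj hcart Y
  haveI := Fmap_homLift p q G hG L adj m
  haveI : q.IsHomLift (q.map m) (G.map (Fmap p q G hG L adj m)) := homLift_G p q G hG _ _
  haveI := η_homLift p q G hG L adj hcart X
  haveI := η_homLift p q G hG L adj hcart Y
  haveI : q.IsHomLift (q.map m) (m ≫ η p q G hG L adj hcart Y) := inferInstance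
  haveI : q.IsHomLift (q.map m)
      (η p q G hG L adj hcart X ≫ G.map (Fmap p q G hG L adj m)) := inferInstance
  apply IsStronglyCartesian.ext q (f₀ p q G hG L adj Y) (G.map (φX p q G hG L adj Y)) (q.map m)
  rw [assoc, η_fac, assoc, ← G.map_comp, Fmap_fac, G.map_comp, ← assoc, η_fac]
  simpa using adj.unit.naturality m

/-- The counit of the fibred adjunction. -/
noncomputable def ε (Y : D) : FX p q G hG L adj (G.obj Y) ⟶ Y :=
  φX p q G hG L adj (G.obj Y) ≫ adj.counit.app Y

omit hcart in
lemma f₀_counit (Y : D) :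
    f₀ p q G hG L adj (G.obj Y) ≫ p.map (adj.counit.app Y) = eqToHom (hobj p q G hG Y) := by
  unfold f₀
  rw [assoc]
  have h2 : eqToHom (hobj p q G hG (L.obj (G.obj Y))) ≫ p.map (adj.counit.app Y)
      = q.map (G.map (adj.counit.app Y)) ≫ eqToHom (hobj p q G hG Y) := by
    rw [hmap p q G hG (adj.counit.app Y)]; simp
  rw [h2, ← assoc, ← q.map_comp, adj.right_triangle_components, q.map_id, id_comp]

omit hcart in
lemma ε_homLift (Y : D) : p.IsHomLift (𝟙 (p.obj Y)) (ε p q G hG L adj Y) := by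
  apply IsHomLift.of_fac' p (𝟙 (p.obj Y)) (ε p q G hG L adj Y)
    ((proj p q G hG L adj (G.obj Y)).trans (hobj p q G hG Y)) rfl
  have hφ := IsHomLift.fac' p (f₀ p q G hG L adj (G.obj Y)) (φX p q G hG L adj (G.obj Y))
  show p.map (φX p q G hG L adj (G.obj Y) ≫ adj.counit.app Y) = _
  rw [p.map_comp, hφ]
  simp only [assoc, eqToHom_refl, comp_id, id_comp]
  rw [f₀_counit p q G hG L adj Y, eqToHom_trans]

omit hcart in
lemma ε_nat {Y Y' : D} (k : Y ⟶ Y') :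
    Fmap p q G hG L adj (G.map k) ≫ ε p q G hG L adj Y' = ε p q G hG L adj Y ≫ k := by
  have hnat : L.map (G.map k) ≫ adj.counit.app Y' = adj.counit.app Y ≫ k := by
    simpa using adj.counit.naturality k
  show Fmap p q G hG L adj (G.map k) ≫ φX p q G hG L adj (G.obj Y') ≫ adj.counit.app Y' =
    (φX p q G hG L adj (G.obj Y) ≫ adj.counit.app Y) ≫ k
  rw [← assoc, Fmap_fac, assoc, hnat, assoc]

lemma left_tri (X : E) :
    Fmap p q G hG L adj (η p q G hG L adj hcart X) ≫ ε p q G hG L adj (FX p q G hG L adj X) =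
      𝟙 (FX p q G hG L adj X) := by
  haveI := η_homLift p q G hG L adj hcart X
  haveI := Fmap_homLift p q G hG L adj (η p q G hG L adj hcart X)
  haveI h2 : p.IsHomLift (𝟙 (q.obj X)) (Fmap p q G hG L adj (η p q G hG L adj hcart X)) :=
    homLift_of_homLift_map p q _ (η p q G hG L adj hcart X) _
  haveI := ε_homLift p q G hG L adj (FX p q G hG L adj X)
  haveI h3 : p.IsHomLift (𝟙 (q.obj X)) (ε p q G hG L adj (FX p q G hG L adj X)) :=
    homLift_id_congr p (proj p q G hG L adj X) _
  haveI : p.IsHomLift (𝟙 (q.obj X))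
      (Fmap p q G hG L adj (η p q G hG L adj hcart X) ≫
        ε p q G hG L adj (FX p q G hG L adj X)) := inferInstance
  haveI : p.IsHomLift (𝟙 (q.obj X)) (𝟙 (FX p q G hG L adj X)) :=
    IsHomLift.id (proj p q G hG L adj X)
  apply IsStronglyCartesian.ext p (f₀ p q G hG L adj X) (φX p q G hG L adj X) (𝟙 (q.obj X))
  have hnat : adj.counit.app (FX p q G hG L adj X) ≫ φX p q G hG L adj X =
      L.map (G.map (φX p q G hG L adj X)) ≫ adj.counit.app (L.obj X) := by
    simpa using (adj.counit.naturality (φX p q G hG L adj X)).symm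
  show (Fmap p q G hG L adj (η p q G hG L adj hcart X) ≫
      φX p q G hG L adj (G.obj (FX p q G hG L adj X)) ≫
      adj.counit.app (FX p q G hG L adj X)) ≫ φX p q G hG L adj X = _
  rw [assoc, assoc, hnat, ← assoc, ← assoc, Fmap_fac, assoc, assoc, ← assoc (L.map _),
    ← L.map_comp, η_fac, id_comp, adj.left_triangle_components, comp_id]

lemma right_tri (Y : D) :
    η p q G hG L adj hcart (G.obj Y) ≫ G.map (ε p q G hG L adj Y) = 𝟙 (G.obj Y) := by
  show η p q G hG L adj hcart (G.obj Y) ≫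
      G.map (φX p q G hG L adj (G.obj Y) ≫ adj.counit.app Y) = _
  rw [G.map_comp, ← assoc, η_fac, adj.right_triangle_components]

/-- The fibred adjunction `F ⊣ G`. -/
noncomputable def adjF : F p q G hG L adj ⊣ G where
  unit :=
    { app := fun X => η p q G hG L adj hcart X
      naturality := fun X Y m => η_nat p q G hG L adj hcart m }
  counit :=
    { app := fun Y => ε p q G hG L adj Y
      naturality := fun Y Y' k => ε_nat p q G hG L adj k }
  left_triangle_components X := left_tri p q G hG L adj hcart X
  right_triangle_components Y := right_tri p q G hG L adj hcart Y

end

end FibredAdjAux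


/-- Let `p : D ⥤ B` be a Grothendieck fibration and `q : E ⥤ B` a functor.  If `G : D ⥤ E`
is a functor over `B` preserving strongly cartesian morphisms which has a left adjoint as an
ordinary functor, then `G` has a left adjoint over `B`: there is a functor `F : E ⥤ D` with
`F ⋙ p = q` and an adjunction `F ⊣ G` with vertical unit and counit. -/
theorem fibred_left_adjoint_of_left_adjoint
    {B D E : Type*} [Category B] [Category D] [Category E]
    (p : D ⥤ B) [p.IsFibered] (q : E ⥤ B)
    (G : D ⥤ E) (hG : G ⋙ q = p)
    (hcart : ∀ {X Y : D} (φ : X ⟶ Y), p.IsStronglyCartesian (p.map φ) φ →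
      q.IsStronglyCartesian (q.map (G.map φ)) (G.map φ))
    [G.IsRightAdjoint] :
    ∃ (F : E ⥤ D) (_ : F ⋙ p = q) (adj : F ⊣ G),
      (∀ X : E, q.IsHomLift (𝟙 (q.obj X)) (adj.unit.app X)) ∧
      (∀ Y : D, p.IsHomLift (𝟙 (p.obj Y)) (adj.counit.app Y)) := by
  obtain ⟨L, ⟨adj⟩⟩ := Functor.IsRightAdjoint.exists_leftAdjoint (right := G)
  exact ⟨FibredAdjAux.F p q G hG L adj, FibredAdjAux.hFp p q G hG L adj,
    FibredAdjAux.adjF p q G hG L adj hcart,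
    fun X => FibredAdjAux.η_homLift p q G hG L adj hcart X,
    fun Y => FibredAdjAux.ε_homLift p q G hG L adj Y⟩
end

section
/- Let B be a category with pullbacks in which regular epimorphisms are stable under pullback. Let f : X ⟶ Y be a morphism admitting a factorization f = e ≫ m where e : X ⟶ I is a regular epimorphism and m : I ⟶ Y is a monomorphism. Then for every morphism h : Z ⟶ Y, the base change of f along h (the pullback projection pullback f h ⟶ Z) is a regular epimorphism if and only if h factors through m, i.e., there exists k : Z ⟶ I with k ≫ m = h. -/
/-!
A regular epimorphism is strong, so if the projection `pullback f h ⟶ Z` is regular, the square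
it forms with `pullback.fst f h ≫ e`, `m` and `h` has a diagonal filler `k` with `k ≫ m = h`.
Conversely, if `h = k ≫ m`, then because `m` is mono the pullback of `f = e ≫ m` along `h` is also
a pullback of `e` along `k`, and its projection is regular by stability.
-/

open CategoryTheory Limits

namespace CategoryTheory.IsPullback

variable {C : Type*} [Category C]

theorem of_comp_mono {P X Y I Z : C} {fst : P ⟶ X} {snd : P ⟶ Z} {e : X ⟶ I} {k : Z ⟶ I}
    {m : I ⟶ Y} [Mono m] (sq : IsPullback fst snd (e ≫ m) (k ≫ m)) :
    IsPullback fst snd e k :=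
  of_bot (by simpa using sq) (by simpa [← cancel_mono m] using sq.w)
    (of_vert_isIso_mono (snd := 𝟙 Z) ⟨by simp⟩)

noncomputable def regularEpiSnd {P X Y Z : C} {fst : P ⟶ X} {snd : P ⟶ Z} {f : X ⟶ Y}
    {g : Z ⟶ Y} [HasPullback f g] (sq : IsPullback fst snd f g)
    (h : RegularEpi (pullback.snd f g)) : RegularEpi snd :=
  RegularEpi.ofArrowIso (Arrow.isoMk sq.isoPullback.symm (Iso.refl _) (by simp)) h

end CategoryTheory.IsPullback

/-- In a category with pullbacks in which regular epimorphisms are stable under pullback,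
if `f = e ≫ m` with `e` a regular epimorphism and `m` a monomorphism, then for every
`h : Z ⟶ Y` the base change of `f` along `h` is a regular epimorphism if and only if `h`
factors through `m`. -/
theorem baseChange_regularEpi_iff_factors
    {B : Type*} [Category B] [HasPullbacks B]
    (hstab : ∀ {X Y Z : B} (f : X ⟶ Y) (g : Z ⟶ Y),
      RegularEpi f → RegularEpi (pullback.snd f g))
    {X Y I : B} (f : X ⟶ Y) (e : X ⟶ I) (m : I ⟶ Y)
    (he : RegularEpi e) [Mono m] (hf : f = e ≫ m)
    {Z : B} (h : Z ⟶ Y) :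
    Nonempty (RegularEpi (pullback.snd f h)) ↔ ∃ k : Z ⟶ I, k ≫ m = h := by
  subst hf
  constructor
  · rintro ⟨hreg⟩
    have : IsRegularEpi (pullback.snd (e ≫ m) h) := isRegularEpi_of_regularEpi hreg
    have sq : CommSq (pullback.fst (e ≫ m) h ≫ e) (pullback.snd (e ≫ m) h) m h :=
      ⟨by rw [Category.assoc, pullback.condition]⟩
    exact ⟨sq.lift, sq.fac_right⟩
  · rintro ⟨k, rfl⟩
    have sq : IsPullback (pullback.fst (e ≫ m) (k ≫ m)) (pullback.snd _ _) e k :=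
      (IsPullback.of_hasPullback _ _).of_comp_mono
    exact ⟨sq.regularEpiSnd (hstab e k he)⟩
end

section
/- Let B be a category with pullbacks. Suppose that for every morphism f : X ⟶ Y of B there exist an object I and a monomorphism m : I ⟶ Y such that for every morphism h : Z ⟶ Y, the base change of f along h (the pullback projection pullback f h ⟶ Z) is a split epimorphism if and only if h factors through m. Then every regular epimorphism in B is a split epimorphism. -/
open CategoryTheory Limits

/-- Let `B` be a category with pullbacks.  If for every morphism `f : X ⟶ Y` there is a
monomorphism `m : I ⟶ Y` such that, for every `h : Z ⟶ Y`, the base change of `f` along `h`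
is a split epimorphism iff `h` factors through `m` (i.e. split epimorphisms form a definable
class on the codomain fibration), then every regular epimorphism in `B` is split. -/
theorem regularEpi_splits_of_splitEpi_definable
    {B : Type*} [Category B] [HasPullbacks B]
    (hdef : ∀ {X Y : B} (f : X ⟶ Y), ∃ (I : B) (m : I ⟶ Y), Mono m ∧
      ∀ {Z : B} (h : Z ⟶ Y),
        IsSplitEpi (pullback.snd f h) ↔ ∃ k : Z ⟶ I, k ≫ m = h)
    {X Y : B} (f : X ⟶ Y) (hf : RegularEpi f) :
    IsSplitEpi f := by
  obtain ⟨I, m, hm, hiff⟩ := hdef f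
  -- base change of f along f is split epi, with section the diagonal
  have h1 : IsSplitEpi (pullback.snd f f) :=
    ⟨⟨⟨pullback.lift (𝟙 X) (𝟙 X) (by simp), pullback.lift_snd _ _ _⟩⟩⟩
  obtain ⟨k, hk⟩ := (hiff f).mp h1
  -- f is a strong epi, lift against the mono m
  haveI : StrongEpi f := (haveI := isRegularEpi_of_regularEpi hf; inferInstance)
  have sq : CommSq k f m (𝟙 Y) := ⟨by simpa using hk⟩
  have h2 : IsSplitEpi (pullback.snd f (𝟙 Y)) := (hiff (𝟙 Y)).mpr ⟨sq.lift, sq.fac_right⟩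
  obtain ⟨⟨s, hs⟩⟩ := h2
  exact ⟨⟨⟨s ≫ pullback.fst f (𝟙 Y), by
    have := pullback.condition (f := f) (g := 𝟙 Y)
    rw [Category.assoc, this, ← Category.assoc, hs]
    simp⟩⟩⟩
end

section
/- Let q : E ⥤ B be a functor and T : E ⥤ E an endofunctor with T ⋙ q = q, equipped with vertical natural transformations η : 𝟭 E ⟹ T and μ : T ⋙ T ⟹ T making (T, η, μ) a monad. Let f : X ⟶ Y be strongly cartesian with respect to q, and let s : T.obj Y ⟶ Y be a vertical morphism. Then: (i) there exists a unique vertical morphism t : T.obj X ⟶ X such that t ≫ f = T.map f ≫ s; (ii) if s satisfies the unit law η.app Y ≫ s = 𝟙 Y, then t satisfies η.app X ≫ t = 𝟙 X; (iii) if s additionally satisfies the multiplication law μ.app Y ≫ s = T.map s ≫ s, then t satisfies μ.app X ≫ t = T.map t ≫ t. -/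
open CategoryTheory

lemma T_map_isHomLift {B E : Type*} [Category B] [Category E]
    (q : E ⥤ B) (T : E ⥤ E) (hT : T ⋙ q = q) {R S : B} {a b : E}
    (g : R ⟶ S) (φ : a ⟶ b) [q.IsHomLift g φ] : q.IsHomLift g (T.map φ) := by
  have ha : q.obj (T.obj a) = R := (Functor.congr_obj hT a).trans
    (IsHomLift.domain_eq q g φ)
  have hb : q.obj (T.obj b) = S := (Functor.congr_obj hT b).trans
    (IsHomLift.codomain_eq q g φ)
  apply IsHomLift.of_fac' q g (T.map φ) ha hb
  have h1 : q.map (T.map φ) = (T ⋙ q).map φ := rfl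
  rw [h1, Functor.congr_hom hT φ, IsHomLift.fac' q g φ]
  simp

/-- Let `q : E ⥤ B` be a functor and `(T, η, μ)` a monad over `B`, i.e. an endofunctor
`T : E ⥤ E` with `T ⋙ q = q` and vertical unit and multiplication satisfying the monad
laws.  If `f : X ⟶ Y` is strongly cartesian and `s : T.obj Y ⟶ Y` is a vertical morphism,
then there is a unique vertical `t : T.obj X ⟶ X` with `t ≫ f = T.map f ≫ s`; moreover `t`
satisfies the unit law whenever `s` does, and the multiplication law whenever `s` satisfies
both laws. -/
theorem monad_algebra_structure_creates_cartesian_lifts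
    {B E : Type*} [Category B] [Category E]
    (q : E ⥤ B) (T : E ⥤ E) (hT : T ⋙ q = q)
    (η : 𝟭 E ⟶ T) (μ : T ⋙ T ⟶ T)
    (hη : ∀ X : E, q.IsHomLift (𝟙 (q.obj X)) (η.app X))
    (hμ : ∀ X : E, q.IsHomLift (𝟙 (q.obj X)) (μ.app X))
    (unit_left : ∀ X : E, η.app (T.obj X) ≫ μ.app X = 𝟙 (T.obj X))
    (unit_right : ∀ X : E, T.map (η.app X) ≫ μ.app X = 𝟙 (T.obj X))
    (assoc : ∀ X : E, μ.app (T.obj X) ≫ μ.app X = T.map (μ.app X) ≫ μ.app X)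
    {X Y : E} (f : X ⟶ Y) (hf : q.IsStronglyCartesian (q.map f) f)
    (s : T.obj Y ⟶ Y) (hs : q.IsHomLift (𝟙 (q.obj Y)) s) :
    (∃! t : T.obj X ⟶ X, q.IsHomLift (𝟙 (q.obj X)) t ∧ t ≫ f = T.map f ≫ s) ∧
    (∀ t : T.obj X ⟶ X, (q.IsHomLift (𝟙 (q.obj X)) t ∧ t ≫ f = T.map f ≫ s) →
      ((η.app Y ≫ s = 𝟙 Y → η.app X ≫ t = 𝟙 X) ∧
       (η.app Y ≫ s = 𝟙 Y → μ.app Y ≫ s = T.map s ≫ s →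
         μ.app X ≫ t = T.map t ≫ t))) := by
  haveI := hf
  haveI := hs
  haveI h1 : q.IsHomLift (q.map f) (T.map f) := T_map_isHomLift q T hT _ f
  haveI h2 : q.IsHomLift (q.map f) (T.map f ≫ s) :=
    IsHomLift.comp_lift_id_right' q (q.map f) (T.map f) (q.obj Y) s
  constructor
  · exact Functor.IsStronglyCartesian.universal_property q (q.map f) f (𝟙 (q.obj X)) (q.map f)
      (by simp) (T.map f ≫ s)
  · rintro t ⟨ht, htf⟩
    haveI := ht
    constructor
    · intro hunit
      haveI : q.IsHomLift (𝟙 (q.obj X)) (𝟙 X) := IsHomLift.id rfl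
      haveI : q.IsHomLift (𝟙 (q.obj X)) (η.app X ≫ t) :=
        IsHomLift.comp_lift_id_right' q (𝟙 (q.obj X)) (η.app X) (q.obj X) t
      apply Functor.IsStronglyCartesian.ext q (q.map f) f (𝟙 (q.obj X))
        (ψ := η.app X ≫ t) (ψ' := 𝟙 X)
      rw [Category.assoc, htf, ← Category.assoc,
        show η.app X ≫ T.map f = f ≫ η.app Y from (η.naturality f).symm,
        Category.assoc, hunit, Category.comp_id]
      simp
    · intro hunit hmul
      haveI hμX := hμ X
      haveI hTt : q.IsHomLift (𝟙 (q.obj X)) (T.map t) := T_map_isHomLift q T hT _ t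
      haveI : q.IsHomLift (𝟙 (q.obj X)) (μ.app X ≫ t) :=
        IsHomLift.comp_lift_id_right' q (𝟙 (q.obj X)) (μ.app X) (q.obj X) t
      haveI : q.IsHomLift (𝟙 (q.obj X)) (T.map t ≫ t) :=
        IsHomLift.comp_lift_id_right' q (𝟙 (q.obj X)) (T.map t) (q.obj X) t
      apply Functor.IsStronglyCartesian.ext q (q.map f) f (𝟙 (q.obj X))
        (ψ := μ.app X ≫ t) (ψ' := T.map t ≫ t)
      have hnat : T.map (T.map f) ≫ μ.app Y = μ.app X ≫ T.map f := μ.naturality f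
      calc (μ.app X ≫ t) ≫ f = μ.app X ≫ T.map f ≫ s := by rw [Category.assoc, htf]
        _ = T.map (T.map f) ≫ μ.app Y ≫ s := by rw [← Category.assoc, ← hnat, Category.assoc]
        _ = T.map (T.map f) ≫ T.map s ≫ s := by rw [hmul]
        _ = T.map (T.map f ≫ s) ≫ s := by rw [T.map_comp, Category.assoc]
        _ = T.map (t ≫ f) ≫ s := by rw [htf]
        _ = (T.map t ≫ t) ≫ f := by
            rw [T.map_comp, Category.assoc, Category.assoc, htf]
end

section
/- Let q : E ⥤ B be a functor and M : E ⥤ E an endofunctor with M ⋙ q = q that sends strongly cartesian morphisms (with respect to q) to strongly cartesian morphisms, equipped with vertical natural transformations ε : M ⟹ 𝟭 E and δ : M ⟹ M ⋙ M making (M, ε, δ) a comonad. Let f : X ⟶ Y be strongly cartesian with respect to q, and let s : Y ⟶ M.obj Y be a vertical morphism. Then: (i) there exists a unique vertical morphism t : X ⟶ M.obj X such that t ≫ M.map f = f ≫ s; (ii) if s satisfies the counit law s ≫ ε.app Y = 𝟙 Y, then t satisfies t ≫ ε.app X = 𝟙 X; (iii) if s additionally satisfies the comultiplication law s ≫ δ.app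 Y = s ≫ M.map s, then t satisfies t ≫ δ.app X = t ≫ M.map t. -/
/-!
Since `M ⋙ q = q`, the functor `M` preserves lifts and (by hypothesis) strong cartesianness, so
`M.map f` and `M.map (M.map f)` are strongly cartesian over `q.map f`. The morphism `t` is the
unique vertical factorisation of `f ≫ s` through `M.map f`. The counit and coassociativity laws
for `t` follow from those for `s` by naturality of `ε` and `δ`, since vertical morphisms out of
`X` are determined by their composites with a strongly cartesian morphism.
-/

open CategoryTheory

namespace CategoryTheory.Functor

variable {B E : Type*} [Category B] [Category E] {q : E ⥤ B}

lemma isStronglyCartesian_eqToHom_comp_comp_eqToHom_iff {R S R' S' : B} {a b : E}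
    (f : R ⟶ S) (hR : R' = R) (hS : S = S') (φ : a ⟶ b) :
    q.IsStronglyCartesian (eqToHom hR ≫ f ≫ eqToHom hS) φ ↔ q.IsStronglyCartesian f φ := by
  subst hR hS
  simp

lemma isHomLift_map_of_comp_eq {M : E ⥤ E} (hM : M ⋙ q = q) {R S : B} {a b : E}
    (f : R ⟶ S) (φ : a ⟶ b) [q.IsHomLift f φ] : q.IsHomLift f (M.map φ) := by
  obtain ⟨⟩ := ‹q.IsHomLift f φ›
  have := IsHomLift.map (p := q) (M.map φ)
  rwa [← Functor.comp_map, Functor.congr_hom hM φ, IsHomLift.lift_eqToHom_comp_iff,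
    IsHomLift.lift_comp_eqToHom_iff] at this

lemma isStronglyCartesian_map_of_comp_eq {M : E ⥤ E} (hM : M ⋙ q = q)
    (hMcart : ∀ {X Y : E} (φ : X ⟶ Y), q.IsStronglyCartesian (q.map φ) φ →
      q.IsStronglyCartesian (q.map (M.map φ)) (M.map φ))
    {R S : B} {a b : E} (f : R ⟶ S) (φ : a ⟶ b) [q.IsStronglyCartesian f φ] :
    q.IsStronglyCartesian f (M.map φ) := by
  obtain ⟨⟩ := IsStronglyCartesian.toIsHomLift (p := q) (f := f) (φ := φ)
  have := hMcart φ inferInstance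
  rwa [← Functor.comp_map, Functor.congr_hom hM φ,
    isStronglyCartesian_eqToHom_comp_comp_eqToHom_iff] at this

end CategoryTheory.Functor

theorem comonad_coalgebra_structure_creates_cartesian_lifts_general
    {B E : Type*} [Category B] [Category E]
    (q : E ⥤ B) (M : E ⥤ E) (hM : M ⋙ q = q)
    (hMcart : ∀ {X Y : E} (φ : X ⟶ Y), q.IsStronglyCartesian (q.map φ) φ →
      q.IsStronglyCartesian (q.map (M.map φ)) (M.map φ))
    (ε : M ⟶ 𝟭 E) (δ : M ⟶ M ⋙ M)
    (hε : ∀ X : E, q.IsHomLift (𝟙 (q.obj X)) (ε.app X))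
    (hδ : ∀ X : E, q.IsHomLift (𝟙 (q.obj X)) (δ.app X))
    {X Y : E} (f : X ⟶ Y) (hf : q.IsStronglyCartesian (q.map f) f)
    (s : Y ⟶ M.obj Y) (hs : q.IsHomLift (𝟙 (q.obj Y)) s) :
    (∃! t : X ⟶ M.obj X, q.IsHomLift (𝟙 (q.obj X)) t ∧ t ≫ M.map f = f ≫ s) ∧
    (∀ t : X ⟶ M.obj X, (q.IsHomLift (𝟙 (q.obj X)) t ∧ t ≫ M.map f = f ≫ s) →
      ((s ≫ ε.app Y = 𝟙 Y → t ≫ ε.app X = 𝟙 X) ∧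
       (s ≫ ε.app Y = 𝟙 Y → s ≫ δ.app Y = s ≫ M.map s →
         t ≫ δ.app X = t ≫ M.map t))) := by
  have hMf := Functor.isStronglyCartesian_map_of_comp_eq hM hMcart (q.map f) f
  have hMMf := Functor.isStronglyCartesian_map_of_comp_eq hM hMcart (q.map f) (M.map f)
  refine ⟨Functor.IsCartesian.universal_property (f := q.map f) (φ := M.map f) (f ≫ s), ?_⟩
  rintro t ⟨ht, htf⟩
  have hMt := Functor.isHomLift_map_of_comp_eq hM (𝟙 (q.obj X)) t
  have hδX := hδ X
  have hεX := hε X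
  refine ⟨fun hsε => Functor.IsCartesian.ext q (q.map f) f (t ≫ ε.app X) (𝟙 X) ?_,
    fun _ hsδ => Functor.IsCartesian.ext q (q.map f) (M.map (M.map f)) _ _ ?_⟩
  · calc (t ≫ ε.app X) ≫ f = (t ≫ M.map f) ≫ ε.app Y := by simp
      _ = 𝟙 X ≫ f := by rw [htf, Category.assoc, hsε]; simp
  · calc (t ≫ δ.app X) ≫ M.map (M.map f) = (t ≫ M.map f) ≫ δ.app Y := by simp
      _ = f ≫ s ≫ M.map s := by rw [htf, Category.assoc, hsδ]
      _ = (t ≫ M.map t) ≫ M.map (M.map f) := by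
        rw [Category.assoc, ← M.map_comp, htf, M.map_comp, reassoc_of% htf]

/-- Let `q : E ⥤ B` be a functor and `(M, ε, δ)` a fibred comonad over `B`, i.e. an
endofunctor `M : E ⥤ E` with `M ⋙ q = q` preserving strongly cartesian morphisms, with
vertical counit and comultiplication satisfying the comonad laws.  If `f : X ⟶ Y` is
strongly cartesian and `s : Y ⟶ M.obj Y` is a vertical morphism, then there is a unique
vertical `t : X ⟶ M.obj X` with `t ≫ M.map f = f ≫ s`; moreover `t` satisfies the counit
law whenever `s` does, and the comultiplication law whenever `s` satisfies both laws. -/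
theorem comonad_coalgebra_structure_creates_cartesian_lifts
    {B E : Type*} [Category B] [Category E]
    (q : E ⥤ B) (M : E ⥤ E) (hM : M ⋙ q = q)
    (hMcart : ∀ {X Y : E} (φ : X ⟶ Y), q.IsStronglyCartesian (q.map φ) φ →
      q.IsStronglyCartesian (q.map (M.map φ)) (M.map φ))
    (ε : M ⟶ 𝟭 E) (δ : M ⟶ M ⋙ M)
    (hε : ∀ X : E, q.IsHomLift (𝟙 (q.obj X)) (ε.app X))
    (hδ : ∀ X : E, q.IsHomLift (𝟙 (q.obj X)) (δ.app X))
    (counit_left : ∀ X : E, δ.app X ≫ ε.app (M.obj X) = 𝟙 (M.obj X))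
    (counit_right : ∀ X : E, δ.app X ≫ M.map (ε.app X) = 𝟙 (M.obj X))
    (coassoc : ∀ X : E, δ.app X ≫ δ.app (M.obj X) = δ.app X ≫ M.map (δ.app X))
    {X Y : E} (f : X ⟶ Y) (hf : q.IsStronglyCartesian (q.map f) f)
    (s : Y ⟶ M.obj Y) (hs : q.IsHomLift (𝟙 (q.obj Y)) s) :
    (∃! t : X ⟶ M.obj X, q.IsHomLift (𝟙 (q.obj X)) t ∧ t ≫ M.map f = f ≫ s) ∧
    (∀ t : X ⟶ M.obj X, (q.IsHomLift (𝟙 (q.obj X)) t ∧ t ≫ M.map f = f ≫ s) →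
      ((s ≫ ε.app Y = 𝟙 Y → t ≫ ε.app X = 𝟙 X) ∧
       (s ≫ ε.app Y = 𝟙 Y → s ≫ δ.app Y = s ≫ M.map s →
         t ≫ δ.app X = t ≫ M.map t))) :=
  comonad_coalgebra_structure_creates_cartesian_lifts_general q M hM hMcart ε δ hε hδ f hf s hs
end

section
/- Let Z be a topological space, h : Z → ℝ a continuous map, and k : Z × unitInterval → ℝ a continuous map. For each c : ℝ define j_c : Z × unitInterval → ℝ × ℝ by j_c (z, t) = (h z + c * min (k (z, 0) + 1) 0 * max (k (z, t) - 1) 0, k (z, t)). Then: (i) j_c is continuous; (ii) j_c (z, 0) = (h z, k (z, 0)) for all z; (iii) the second component of j_c (z, t) equals k (z, t) for all (z, t); (iv) if k (z, t) < 1 for all (z, t), then j_c (z, t) = (h z, k (z, t)) for all (z, t); and (v) if -1 < k (z, t) for all (z, t), then j_c (z, t) = (h z, k (z, t)) for all (z, t). In particular, in cases (iv) and (v) the value of j_c does not depend on c. -/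
open unitInterval

/-- For continuous `h : Z → ℝ` and `k : Z × [0,1] → ℝ`, the maps
`j c (z, t) = (h z + c * min (k (z,0) + 1) 0 * max (k (z,t) - 1) 0, k (z,t))` are
continuous diagonal fillers agreeing with `(h z, k (z,t))` at `t = 0`, lying over `k` in
the second component, and independent of `c` whenever `k` factors through `(-∞, 1)` or
through `(-1, ∞)`. -/
theorem hurewicz_fillers_properties
    {Z : Type*} [TopologicalSpace Z]
    (h : Z → ℝ) (hh : Continuous h)
    (k : Z × unitInterval → ℝ) (hk : Continuous k)
    (j : ℝ → Z × unitInterval → ℝ × ℝ)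
    (hj : ∀ (c : ℝ) (z : Z) (t : unitInterval),
      j c (z, t) = (h z + c * min (k (z, 0) + 1) 0 * max (k (z, t) - 1) 0, k (z, t))) :
    (∀ c : ℝ, Continuous (j c)) ∧
    (∀ (c : ℝ) (z : Z), j c (z, 0) = (h z, k (z, 0))) ∧
    (∀ (c : ℝ) (p : Z × unitInterval), (j c p).2 = k p) ∧
    ((∀ p : Z × unitInterval, k p < 1) →
      ∀ (c : ℝ) (p : Z × unitInterval), j c p = (h p.1, k p)) ∧
    ((∀ p : Z × unitInterval, -1 < k p) →
      ∀ (c : ℝ) (p : Z × unitInterval), j c p = (h p.1, k p)) := by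
  refine ⟨?_, ?_, ?_, ?_, ?_⟩
  · intro c
    have heq : j c = fun p : Z × unitInterval =>
        (h p.1 + c * min (k (p.1, 0) + 1) 0 * max (k p - 1) 0, k p) := by
      funext p
      obtain ⟨z, t⟩ := p
      exact hj c z t
    rw [heq]
    refine Continuous.prodMk ?_ hk
    refine ((hh.comp continuous_fst).add ?_)
    refine Continuous.mul (Continuous.mul continuous_const ?_) ?_
    · exact ((hk.comp ((continuous_fst).prodMk continuous_const)).add
        continuous_const).min continuous_const
    · exact (hk.sub continuous_const).max continuous_const
  · intro c z
    rw [hj c z 0]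
    rcases le_or_gt (k (z, 0)) 1 with h1 | h1
    · have : max (k (z, 0) - 1) 0 = 0 := max_eq_right (by linarith)
      simp [this]
    · have : min (k (z, 0) + 1) 0 = 0 := min_eq_right (by linarith)
      simp [this]
  · intro c p
    obtain ⟨z, t⟩ := p
    rw [hj c z t]
  · intro hlt c p
    obtain ⟨z, t⟩ := p
    rw [hj c z t]
    have : max (k (z, t) - 1) 0 = 0 := max_eq_right (by linarith [hlt (z, t)])
    simp [this]
  · intro hlt c p
    obtain ⟨z, t⟩ := p
    rw [hj c z t]
    have : min (k (z, 0) + 1) 0 = 0 := min_eq_right (by linarith [hlt (z, 0)])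
    simp [this]
end
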